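/- The dual norm of the SOSlasso norm h satisfies h*(u) ≤ (1/2) max_{G∈𝒢} ‖u_G‖₂ for every u ∈ ℝ^p, where u_G denotes the restriction of u to coordinates in G. -/

import Mathlib

open Finset

/-- Euclidean (ℓ2) norm of a vector in ℝ^p. -/
noncomputable def l2 {p : ℕ} (x : Fin p → ℝ) : ℝ := Real.sqrt (∑ i, (x i) ^ 2)

/-- ℓ1 norm of a vector in ℝ^p. -/
noncomputable def l1 {p : ℕ} (x : Fin p → ℝ) : ℝ := ∑ i, |x i|

/-- `w` is supported on the group `G`. -/
def IsSupported {p : ℕ} (G : Finset (Fin p)) (w : Fin p → ℝ) : Prop :=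
  ∀ i, i ∉ G → w i = 0

/-- A feasible decomposition of `x` over the group collection `𝒢`. -/
def Feasible {p : ℕ} (𝒢 : Finset (Finset (Fin p))) (x : Fin p → ℝ)
    (w : Finset (Fin p) → Fin p → ℝ) : Prop :=
  (∀ G ∈ 𝒢, IsSupported G (w G)) ∧ ∑ G ∈ 𝒢, w G = x

/-- The SOSlasso regularizer. -/
noncomputable def soslasso {p : ℕ} (𝒢 : Finset (Finset (Fin p))) (x : Fin p → ℝ) : ℝ :=
  sInf ((fun w => ∑ G ∈ 𝒢, (l2 (w G) + l1 (w G))) '' {w | Feasible 𝒢 x w})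

/-- The groups cover all of the coordinates. -/
def Covers {p : ℕ} (𝒢 : Finset (Finset (Fin p))) : Prop := ∀ i : Fin p, ∃ G ∈ 𝒢, i ∈ G

/-- Restriction of a vector to the coordinates in `G`. -/
def restr {p : ℕ} (G : Finset (Fin p)) (u : Fin p → ℝ) : Fin p → ℝ :=
  fun i => if i ∈ G then u i else 0

/-- The dual norm of the SOSlasso regularizer. -/
noncomputable def soslassoDual {p : ℕ} (𝒢 : Finset (Finset (Fin p))) (u : Fin p → ℝ) : ℝ :=
  sSup {r | ∃ x : Fin p → ℝ, soslasso 𝒢 x ≤ 1 ∧ r = ∑ i, x i * u i}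

lemma l2_nonneg {p : ℕ} (x : Fin p → ℝ) : 0 ≤ l2 x := Real.sqrt_nonneg _

lemma l2_le_l1 {p : ℕ} (x : Fin p → ℝ) : l2 x ≤ l1 x := by
  have h : ∑ i, (x i)^2 ≤ (∑ i, |x i|)^2 := by
    calc ∑ i, (x i)^2 = ∑ i, |x i|^2 := by simp [sq_abs]
    _ ≤ (∑ i, |x i|)^2 := Finset.sum_sq_le_sq_sum_of_nonneg (fun i _ => abs_nonneg _)
  calc l2 x ≤ Real.sqrt ((∑ i, |x i|)^2) := Real.sqrt_le_sqrt h
  _ = l1 x := Real.sqrt_sq (Finset.sum_nonneg fun i _ => abs_nonneg _)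

lemma cauchy {p : ℕ} (f g : Fin p → ℝ) : ∑ i, f i * g i ≤ l2 f * l2 g := by
  have h := Finset.sum_mul_sq_le_sq_mul_sq Finset.univ f g
  calc ∑ i, f i * g i ≤ |∑ i, f i * g i| := le_abs_self _
  _ = Real.sqrt ((∑ i, f i * g i)^2) := (Real.sqrt_sq_eq_abs _).symm
  _ ≤ Real.sqrt ((∑ i, f i ^ 2) * ∑ i, g i ^ 2) := Real.sqrt_le_sqrt h
  _ = l2 f * l2 g := Real.sqrt_mul (Finset.sum_nonneg fun i _ => sq_nonneg _) _

lemma feasible_nonempty {p : ℕ} (𝒢 : Finset (Finset (Fin p))) (hcov : Covers 𝒢)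
    (x : Fin p → ℝ) : {w | Feasible 𝒢 x w}.Nonempty := by
  choose g hg hgi using hcov
  refine ⟨fun G i => if g i = G then x i else 0, ?_, ?_⟩
  · intro G hG i hi
    simp only
    rw [if_neg]
    rintro rfl
    exact hi (hgi i)
  · funext i
    simp only [Finset.sum_apply]
    rw [Finset.sum_eq_single (g i)]
    · simp
    · intro G _ hGne; rw [if_neg (fun h => hGne h.symm)]
    · intro h; exact absurd (hg i) h

/-- The dual norm of the SOSlasso norm satisfies
`h*(u) ≤ (1/2) max_{G ∈ 𝒢} ‖u_G‖₂`. -/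
theorem soslasso_dual_upper {p : ℕ} (𝒢 : Finset (Finset (Fin p))) (hcov : Covers 𝒢)
    (hne : 𝒢.Nonempty) (u : Fin p → ℝ) :
    soslassoDual 𝒢 u ≤ (1 / 2) * 𝒢.sup' hne (fun G => l2 (restr G u)) := by
  set M := 𝒢.sup' hne (fun G => l2 (restr G u)) with hM
  obtain ⟨G₀, hG₀⟩ := hne
  have hM0 : 0 ≤ M := le_trans (l2_nonneg _) (Finset.le_sup' (fun G => l2 (restr G u)) hG₀)
  apply Real.sSup_le
  · rintro r ⟨x, hx, rfl⟩
    -- key: for each feasible w, ⟨x,u⟩ ≤ (M/2) * ∑ (l2 + l1)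
    have key : ∀ w, Feasible 𝒢 x w →
        ∑ i, x i * u i ≤ (M / 2) * ∑ G ∈ 𝒢, (l2 (w G) + l1 (w G)) := by
      intro w ⟨hsupp, hsum⟩
      have h1 : ∑ i, x i * u i = ∑ G ∈ 𝒢, ∑ i, w G i * u i := by
        rw [Finset.sum_comm]
        refine Finset.sum_congr rfl fun i _ => ?_
        rw [← Finset.sum_mul]
        congr 1
        rw [← hsum]; simp
      rw [h1]
      have h2 : ∀ G ∈ 𝒢, ∑ i, w G i * u i ≤ (M / 2) * (l2 (w G) + l1 (w G)) := by
        intro G hG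
        have e : ∑ i, w G i * u i = ∑ i, w G i * restr G u i := by
          refine Finset.sum_congr rfl fun i _ => ?_
          by_cases hi : i ∈ G
          · simp [restr, hi]
          · simp [hsupp G hG i hi]
        rw [e]
        calc ∑ i, w G i * restr G u i ≤ l2 (w G) * l2 (restr G u) := cauchy _ _
        _ ≤ l2 (w G) * M := by
            exact mul_le_mul_of_nonneg_left (Finset.le_sup' (fun G => l2 (restr G u)) hG) (l2_nonneg _)
        _ ≤ ((l2 (w G) + l1 (w G)) / 2) * M := by
            apply mul_le_mul_of_nonneg_right _ hM0
            have := l2_le_l1 (w G)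
            linarith
        _ = (M / 2) * (l2 (w G) + l1 (w G)) := by ring
      calc ∑ G ∈ 𝒢, ∑ i, w G i * u i ≤ ∑ G ∈ 𝒢, (M / 2) * (l2 (w G) + l1 (w G)) :=
            Finset.sum_le_sum h2
      _ = (M / 2) * ∑ G ∈ 𝒢, (l2 (w G) + l1 (w G)) := by rw [Finset.mul_sum]
    -- now use approximate minimizer
    refine le_of_forall_pos_le_add fun ε hε => ?_
    have hSne : ((fun w => ∑ G ∈ 𝒢, (l2 (w G) + l1 (w G))) '' {w | Feasible 𝒢 x w}).Nonempty :=
      (feasible_nonempty 𝒢 hcov x).image _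
    have hε' : 0 < 2 * ε / (M + 1) := by positivity
    obtain ⟨v, ⟨w, hw, rfl⟩, hv⟩ := Real.lt_sInf_add_pos hSne hε'
    have hv1 : ∑ G ∈ 𝒢, (l2 (w G) + l1 (w G)) ≤ 1 + 2 * ε / (M + 1) := by
      have hx' : sInf ((fun w => ∑ G ∈ 𝒢, (l2 (w G) + l1 (w G))) '' {w | Feasible 𝒢 x w}) ≤ 1 := hx
      linarith [hv, hx']
    calc ∑ i, x i * u i ≤ (M / 2) * ∑ G ∈ 𝒢, (l2 (w G) + l1 (w G)) := key w hw
    _ ≤ (M / 2) * (1 + 2 * ε / (M + 1)) := by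
        apply mul_le_mul_of_nonneg_left hv1 (by linarith)
    _ = M / 2 + M / (M + 1) * ε := by field_simp
    _ ≤ 1 / 2 * M + ε := by
        have h1 : M / (M + 1) ≤ 1 := by
          rw [div_le_one (by linarith)]; linarith
        have : M / (M + 1) * ε ≤ 1 * ε := mul_le_mul_of_nonneg_right h1 hε.le
        linarith
  · positivity
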